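/- arXiv:2011.10966 — 3 statements merged into one kernel-verified Lean document; each statement's English description precedes it below -/
import Mathlib

section
/- One-step mean-variance minimization lemma: let S ∈ ℝ^{n×n} be symmetric positive definite, γ ∈ ℝⁿ, μ > 0, and c ∈ ℝ. For every square-integrable ℝⁿ-valued random vector π on a probability space, E[ μ·πᵀSπ − γᵀπ + μ·(c + γᵀ(π − E[π]))² ] ≥ μc² − (γᵀS⁻¹γ)/(4μ), and equality holds for the constant random vector π ≡ (1/(2μ))·S⁻¹γ. -/
/-!
Completing the square, `μ xᵀSx − γᵀx = μ (x − x*)ᵀS(x − x*) − γᵀS⁻¹γ/(4μ)` with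
`x* = S⁻¹γ/(2μ)`, bounds the first part of the integrand pointwise. The centred term has
expectation `E[(c + Z − E Z)²] = c² + Var Z ≥ c²` with `Z = γᵀπ`. The constant `π ≡ x*`
attains both bounds.
-/

open MeasureTheory ProbabilityTheory Matrix

namespace Matrix

variable {ι : Type*} [Fintype ι]

lemma mulVec_nonsing_inv_mulVec [DecidableEq ι] {R : Type*} [CommRing R] {A : Matrix ι ι R}
    (h : IsUnit A.det) (v : ι → R) : A *ᵥ (A⁻¹ *ᵥ v) = v := by
  rw [mulVec_mulVec, mul_nonsing_inv _ h, one_mulVec]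

lemma IsSymm.dotProduct_mulVec_comm {R : Type*} [CommSemiring R] {S : Matrix ι ι R}
    (hS : S.IsSymm) (x y : ι → R) : x ⬝ᵥ (S *ᵥ y) = y ⬝ᵥ (S *ᵥ x) := by
  rw [← dotProduct_transpose_mulVec, hS.eq]

lemma IsSymm.mul_dotProduct_mulVec_sub_dotProduct {S : Matrix ι ι ℝ} (hS : S.IsSymm)
    {γ u : ι → ℝ} (hu : S *ᵥ u = γ) {μ : ℝ} (hμ : μ ≠ 0) (x : ι → ℝ) :
    μ * (x ⬝ᵥ (S *ᵥ x)) - γ ⬝ᵥ x =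
      μ * ((x - (1 / (2 * μ)) • u) ⬝ᵥ (S *ᵥ (x - (1 / (2 * μ)) • u))) - γ ⬝ᵥ u / (4 * μ) := by
  rw [mulVec_sub, mulVec_smul, hu, sub_dotProduct, dotProduct_sub, dotProduct_sub,
    hS.dotProduct_mulVec_comm ((1 / (2 * μ)) • u) x, mulVec_smul, hu]
  simp only [smul_dotProduct, dotProduct_smul, smul_eq_mul, dotProduct_comm x γ,
    dotProduct_comm u γ]
  field_simp
  ring

lemma PosDef.neg_dotProduct_inv_mulVec_div_le [DecidableEq ι] {S : Matrix ι ι ℝ}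
    (hS : S.PosDef) (γ : ι → ℝ) {μ : ℝ} (hμ : 0 < μ) (x : ι → ℝ) :
    -(γ ⬝ᵥ (S⁻¹ *ᵥ γ) / (4 * μ)) ≤ μ * (x ⬝ᵥ (S *ᵥ x)) - γ ⬝ᵥ x := by
  rw [(isHermitian_iff_isSymm.mp hS.isHermitian).mul_dotProduct_mulVec_sub_dotProduct
    (mulVec_nonsing_inv_mulVec hS.det_pos.ne'.isUnit γ) hμ.ne']
  have hsq := hS.posSemidef.dotProduct_mulVec_nonneg (x - (1 / (2 * μ)) • (S⁻¹ *ᵥ γ))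
  rw [star_trivial] at hsq
  linarith [mul_nonneg hμ.le hsq]

end Matrix

namespace MeasureTheory

variable {Ω ι κ : Type*} [MeasurableSpace Ω] {P : Measure Ω} [Fintype ι]

lemma MemLp.const_dotProduct {p : ENNReal} {f : Ω → ι → ℝ} (hf : MemLp f p P) (γ : ι → ℝ) :
    MemLp (fun ω => γ ⬝ᵥ f ω) p P := by
  simp only [dotProduct]
  exact memLp_finsetSum _ fun i _ => (hf.eval i).const_mul (γ i)

lemma MemLp.mulVec [Fintype κ] {p : ENNReal} {f : Ω → ι → ℝ} (hf : MemLp f p P)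
    (A : Matrix κ ι ℝ) : MemLp (fun ω => A *ᵥ f ω) p P :=
  memLp_pi_iff.2 fun k => hf.const_dotProduct (A k)

lemma MemLp.integrable_dotProduct {f g : Ω → ι → ℝ} (hf : MemLp f 2 P) (hg : MemLp g 2 P) :
    Integrable (fun ω => f ω ⬝ᵥ g ω) P := by
  simp only [dotProduct]
  exact integrable_finsetSum _ fun i _ => (hf.eval i).integrable_mul (hg.eval i)

lemma integral_dotProduct (γ : ι → ℝ) {f : Ω → ι → ℝ} (hf : Integrable f P) :
    ∫ ω, γ ⬝ᵥ f ω ∂P = γ ⬝ᵥ fun i => ∫ ω, f ω i ∂P := by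
  simp only [dotProduct]
  rw [integral_finsetSum _ fun i _ => (hf.eval i).const_mul (γ i)]
  simp only [integral_const_mul]

variable [IsProbabilityMeasure P]

lemma sq_integral_le_integral_sq {X : Ω → ℝ} (hX : MemLp X 2 P) :
    (∫ ω, X ω ∂P) ^ 2 ≤ ∫ ω, X ω ^ 2 ∂P := by
  have := variance_nonneg X P
  rw [variance_eq_sub hX] at this
  exact sub_nonneg.mp this

lemma sq_le_integral_sq_add_sub_integral {X : Ω → ℝ} (hX : MemLp X 2 P) (c : ℝ) :
    c ^ 2 ≤ ∫ ω, (c + (X ω - ∫ ω', X ω' ∂P)) ^ 2 ∂P := by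
  have hXint := hX.integrable one_le_two
  have hmean : ∫ ω, c + (X ω - ∫ ω', X ω' ∂P) ∂P = c := by
    have hcentered : Integrable (fun ω => X ω - ∫ ω', X ω' ∂P) P :=
      hXint.sub (integrable_const _)
    rw [integral_add (integrable_const c) hcentered,
      integral_sub hXint (integrable_const _)]
    simp
  have hW : MemLp (fun ω => c + (X ω - ∫ ω', X ω' ∂P)) 2 P :=
    (memLp_const c).add (hX.sub (memLp_const _))
  simpa only [hmean] using sq_integral_le_integral_sq hW

end MeasureTheory

theorem one_step_mean_variance_min_general {Ω : Type*} [MeasurableSpace Ω]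
    (P : Measure Ω) [IsProbabilityMeasure P]
    (n : ℕ) (S : Matrix (Fin n) (Fin n) ℝ) (hS : S.PosDef)
    (γ : Fin n → ℝ) (μ c : ℝ) (hμ : 0 < μ) :
    (∀ π : Ω → Fin n → ℝ, MemLp π 2 P →
      μ * c ^ 2 - γ ⬝ᵥ (S⁻¹ *ᵥ γ) / (4 * μ) ≤
        ∫ ω, (μ * (π ω ⬝ᵥ (S *ᵥ π ω)) - γ ⬝ᵥ π ω
          + μ * (c + γ ⬝ᵥ (fun i => π ω i - ∫ ω', π ω' i ∂P)) ^ 2) ∂P) ∧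
    (∫ ω, (μ * (((1 / (2 * μ)) • (S⁻¹ *ᵥ γ)) ⬝ᵥ (S *ᵥ ((1 / (2 * μ)) • (S⁻¹ *ᵥ γ))))
          - γ ⬝ᵥ ((1 / (2 * μ)) • (S⁻¹ *ᵥ γ))
          + μ * (c + γ ⬝ᵥ (fun i => ((1 / (2 * μ)) • (S⁻¹ *ᵥ γ)) i
              - ∫ _ω', ((1 / (2 * μ)) • (S⁻¹ *ᵥ γ)) i ∂P)) ^ 2) ∂P
      = μ * c ^ 2 - γ ⬝ᵥ (S⁻¹ *ᵥ γ) / (4 * μ)) := by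
  refine ⟨fun π hπ => ?_, ?_⟩
  · have hlin : MemLp (fun ω => γ ⬝ᵥ π ω) 2 P := hπ.const_dotProduct γ
    have hcentered (ω : Ω) : γ ⬝ᵥ (fun i => π ω i - ∫ ω', π ω' i ∂P) =
        γ ⬝ᵥ π ω - ∫ ω', γ ⬝ᵥ π ω' ∂P := by
      rw [integral_dotProduct γ (hπ.integrable one_le_two), ← dotProduct_sub]
      rfl
    have hquad : Integrable (fun ω => μ * (π ω ⬝ᵥ (S *ᵥ π ω)) - γ ⬝ᵥ π ω) P :=
      ((hπ.integrable_dotProduct (hπ.mulVec S)).const_mul μ).sub (hlin.integrable one_le_two)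
    have hvar : Integrable (fun ω => μ * (c + (γ ⬝ᵥ π ω - ∫ ω', γ ⬝ᵥ π ω' ∂P)) ^ 2) P :=
      ((memLp_const c).add (hlin.sub (memLp_const _))).integrable_sq.const_mul μ
    have hquad_ge : -(γ ⬝ᵥ (S⁻¹ *ᵥ γ) / (4 * μ)) ≤
        ∫ ω, (μ * (π ω ⬝ᵥ (S *ᵥ π ω)) - γ ⬝ᵥ π ω) ∂P := by
      simpa using integral_mono (integrable_const _) hquad
        fun ω => hS.neg_dotProduct_inv_mulVec_div_le γ hμ (π ω)
    simp_rw [hcentered]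
    rw [integral_add hquad hvar, integral_const_mul]
    linarith [mul_le_mul_of_nonneg_left (sq_le_integral_sq_add_sub_integral hlin c) hμ.le]
  · have hmin := (isHermitian_iff_isSymm.mp hS.isHermitian).mul_dotProduct_mulVec_sub_dotProduct
      (mulVec_nonsing_inv_mulVec hS.det_pos.ne'.isUnit γ) hμ.ne' ((1 / (2 * μ)) • (S⁻¹ *ᵥ γ))
    simp only [sub_self, mulVec_zero, dotProduct_zero, mul_zero, zero_sub] at hmin
    simp only [integral_const, probReal_univ, one_smul, sub_self, hmin]
    rw [← Pi.zero_def, dotProduct_zero]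
    ring

/-- One-step mean-variance minimization lemma: for `S` symmetric positive definite,
`γ ∈ ℝⁿ`, `μ > 0` and `c ∈ ℝ`, every square-integrable `ℝⁿ`-valued random vector `π`
satisfies `E[μ·πᵀSπ − γᵀπ + μ·(c + γᵀ(π − E[π]))²] ≥ μc² − γᵀS⁻¹γ/(4μ)`,
with equality for the constant random vector `π ≡ (1/(2μ))·S⁻¹γ`. -/
theorem one_step_mean_variance_min {Ω : Type*} [MeasurableSpace Ω]
    (P : Measure Ω) [IsProbabilityMeasure P]
    (n : ℕ) (hn : 1 ≤ n) (S : Matrix (Fin n) (Fin n) ℝ) (hS : S.PosDef)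
    (γ : Fin n → ℝ) (μ c : ℝ) (hμ : 0 < μ) :
    (∀ π : Ω → Fin n → ℝ, MemLp π 2 P →
      μ * c ^ 2 - γ ⬝ᵥ (S⁻¹ *ᵥ γ) / (4 * μ) ≤
        ∫ ω, (μ * (π ω ⬝ᵥ (S *ᵥ π ω)) - γ ⬝ᵥ π ω
          + μ * (c + γ ⬝ᵥ (fun i => π ω i - ∫ ω', π ω' i ∂P)) ^ 2) ∂P) ∧
    (∫ ω, (μ * (((1 / (2 * μ)) • (S⁻¹ *ᵥ γ)) ⬝ᵥ (S *ᵥ ((1 / (2 * μ)) • (S⁻¹ *ᵥ γ))))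
          - γ ⬝ᵥ ((1 / (2 * μ)) • (S⁻¹ *ᵥ γ))
          + μ * (c + γ ⬝ᵥ (fun i => ((1 / (2 * μ)) • (S⁻¹ *ᵥ γ)) i
              - ∫ _ω', ((1 / (2 * μ)) • (S⁻¹ *ᵥ γ)) i ∂P)) ^ 2) ∂P
      = μ * c ^ 2 - γ ⬝ᵥ (S⁻¹ *ᵥ γ) / (4 * μ)) :=
  one_step_mean_variance_min_general P n S hS γ μ c hμ
end

section
/- Variance recursion for the optimally controlled wealth: under the Bellman-type strategy π*, for every t < s ≤ T, Var[X^{π*}(s)] = r(s−1)²·Var[X^{π*}(s−1)] + (β(s−1)/(4μ²))·(∏_{h=s−1}^{T−1} r(h))⁻², with Var[X^{π*}(t)] = 0. -/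
open MeasureTheory ProbabilityTheory Matrix Finset

noncomputable section

namespace MeanVarianceModel

variable {Ω : Type*} [MeasurableSpace Ω] {n d : ℕ}

/-- The wealth process `X^π`: `X^π(t) = x` and, for `s > t`,
`X^π(s) = r(s−1)·X^π(s−1) + γ(s−1)·π(s−1) + π(s−1)·(σ(s−1)ξ(s−1))`. -/
def wealthAux (r : ℕ → ℝ) (γ : ℕ → Fin n → ℝ) (σm : ℕ → Matrix (Fin n) (Fin d) ℝ)
    (ξ : ℕ → Ω → Fin d → ℝ) (π : ℕ → Ω → Fin n → ℝ) (t : ℕ) (x : ℝ) :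
    ℕ → Ω → ℝ
  | 0 => fun _ => x
  | k + 1 => fun ω =>
      r (t + k) * wealthAux r γ σm ξ π t x k ω + γ (t + k) ⬝ᵥ π (t + k) ω
        + π (t + k) ω ⬝ᵥ (σm (t + k) *ᵥ ξ (t + k) ω)

/-- Wealth at (absolute) time `s`, started at time `t` from `x`. -/
def wealth (r : ℕ → ℝ) (γ : ℕ → Fin n → ℝ) (σm : ℕ → Matrix (Fin n) (Fin d) ℝ)
    (ξ : ℕ → Ω → Fin d → ℝ) (π : ℕ → Ω → Fin n → ℝ) (t : ℕ) (x : ℝ) (s : ℕ) :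
    Ω → ℝ :=
  wealthAux r γ σm ξ π t x (s - t)

/-- The deterministic auxiliary sequence `Y^π`: `Y^π(t) = y` and
`Y^π(s) = r(s−1)·Y^π(s−1) + γ(s−1)·E[π(s−1)]` for `s > t`. -/
def meanWealthAux (P : Measure Ω) (r : ℕ → ℝ) (γ : ℕ → Fin n → ℝ)
    (π : ℕ → Ω → Fin n → ℝ) (t : ℕ) (y : ℝ) : ℕ → ℝ
  | 0 => y
  | k + 1 =>
      r (t + k) * meanWealthAux P r γ π t y k
        + γ (t + k) ⬝ᵥ (fun i => ∫ ω, π (t + k) ω i ∂P)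

/-- `Y^π` at (absolute) time `s`, started at time `t` from `y`. -/
def meanWealth (P : Measure Ω) (r : ℕ → ℝ) (γ : ℕ → Fin n → ℝ)
    (π : ℕ → Ω → Fin n → ℝ) (t : ℕ) (y : ℝ) (s : ℕ) : ℝ :=
  meanWealthAux P r γ π t y (s - t)

/-- The filtration `𝒢_s` generated by `ξ(t), …, ξ(s−1)`. -/
def filt (ξ : ℕ → Ω → Fin d → ℝ) (t s : ℕ) : MeasurableSpace Ω :=
  ⨆ h ∈ Set.Ico t s, MeasurableSpace.comap (ξ h) inferInstance

/-- An admissible strategy on `{t, …, T−1}`: each `π(s)` is square-integrable and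
`𝒢_s`-measurable. -/
def Admissible (P : Measure Ω) (ξ : ℕ → Ω → Fin d → ℝ) (t T : ℕ)
    (π : ℕ → Ω → Fin n → ℝ) : Prop :=
  ∀ s, t ≤ s → s < T → MemLp (π s) 2 P ∧ Measurable[filt ξ t s] (π s)

/-- The cost `J̃(t,x,y,μ;π) = μ·E[(X^π(T) − Y^π(T))²] − E[X^π(T)]`. -/
def cost (P : Measure Ω) (r : ℕ → ℝ) (γ : ℕ → Fin n → ℝ)
    (σm : ℕ → Matrix (Fin n) (Fin d) ℝ) (ξ : ℕ → Ω → Fin d → ℝ)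
    (t T : ℕ) (μ x y : ℝ) (π : ℕ → Ω → Fin n → ℝ) : ℝ :=
  μ * ∫ ω, (wealth r γ σm ξ π t x T ω - meanWealth P r γ π t y T) ^ 2 ∂P
    - ∫ ω, wealth r γ σm ξ π t x T ω ∂P

/-- The value function `V^μ(t,x,y)`: infimum of the cost over admissible strategies. -/
def value (P : Measure Ω) (r : ℕ → ℝ) (γ : ℕ → Fin n → ℝ)
    (σm : ℕ → Matrix (Fin n) (Fin d) ℝ) (ξ : ℕ → Ω → Fin d → ℝ)
    (T : ℕ) (μ : ℝ) (t : ℕ) (x y : ℝ) : ℝ :=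
  sInf { c | ∃ π : ℕ → Ω → Fin n → ℝ,
    Admissible P ξ t T π ∧ c = cost P r γ σm ξ t T μ x y π }

/-- The risk premium `β(s) = γ(s)ᵀ(σ(s)σ(s)ᵀ)⁻¹γ(s)`. -/
def riskPremium (γ : ℕ → Fin n → ℝ) (σm : ℕ → Matrix (Fin n) (Fin d) ℝ) (s : ℕ) : ℝ :=
  γ s ⬝ᵥ ((σm s * (σm s)ᵀ)⁻¹ *ᵥ γ s)

/-- The Bellman type dynamic optimal strategy
`π*(s) = (1/(2μ))·(σ(s)σ(s)ᵀ)⁻¹γ(s)·(∏_{h=s}^{T−1} r(h))⁻¹` (deterministic). -/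
def bellmanStrategy (r : ℕ → ℝ) (γ : ℕ → Fin n → ℝ)
    (σm : ℕ → Matrix (Fin n) (Fin d) ℝ) (T : ℕ) (μ : ℝ) :
    ℕ → Ω → Fin n → ℝ :=
  fun s _ => ((1 / (2 * μ)) * (∏ h ∈ Finset.Ico s T, r h)⁻¹) •
    ((σm s * (σm s)ᵀ)⁻¹ *ᵥ γ s)

/-- The standard Gaussian measure on `ℝ^d` (product of standard real Gaussians). -/
def stdGaussian (d : ℕ) : Measure (Fin d → ℝ) :=
  Measure.pi fun _ => gaussianReal 0 1

end MeanVarianceModel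

/-! Because `π*` is deterministic, the wealth obeys
`X(s+1) = r(s)·X(s) + γ(s)·π*(s) + (σ(s)ᵀπ*(s))·ξ(s)`, where `X(s)` is measurable with respect to
`ξ(t), …, ξ(s−1)` and hence independent of `ξ(s)`. The variances of the two summands therefore
add, and `Var[a·ξ(s)] = |a|²` for a standard Gaussian `ξ(s)`. Finally, for `a = σᵀπ*` with
`π* = c·(σσᵀ)⁻¹γ` one has `|a|² = c²·γᵀ(σσᵀ)⁻¹(σσᵀ)(σσᵀ)⁻¹γ = c²·β`. -/

namespace MeanVarianceModel

section LinearAlgebra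

variable {m k : Type*} [Fintype m] [Fintype k] {R : Type*} [CommRing R]

lemma transpose_mulVec_dotProduct_self (A : Matrix m k R) (v : m → R) :
    (Aᵀ *ᵥ v) ⬝ᵥ (Aᵀ *ᵥ v) = v ⬝ᵥ (A * Aᵀ) *ᵥ v := by
  rw [dotProduct_mulVec, vecMul_transpose, mulVec_mulVec, dotProduct_comm]

lemma transpose_mulVec_smul_inv_dotProduct_self [DecidableEq m] {A : Matrix m k R}
    (hA : IsUnit (A * Aᵀ).det) (c : R) (g : m → R) :
    (Aᵀ *ᵥ (c • ((A * Aᵀ)⁻¹ *ᵥ g))) ⬝ᵥ (Aᵀ *ᵥ (c • ((A * Aᵀ)⁻¹ *ᵥ g)))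
      = c ^ 2 * (g ⬝ᵥ (A * Aᵀ)⁻¹ *ᵥ g) := by
  rw [mulVec_smul, smul_dotProduct, dotProduct_smul, transpose_mulVec_dotProduct_self,
    mulVec_mulVec, mul_nonsing_inv _ hA, one_mulVec, dotProduct_comm, smul_eq_mul, smul_eq_mul]
  ring

end LinearAlgebra

section Gaussian

variable {d : ℕ}

lemma memLp_dotProduct_stdGaussian (a : Fin d → ℝ) :
    MemLp (fun v => a ⬝ᵥ v) 2 (stdGaussian d) :=
  memLp_finsetSum _ fun i _ =>
    ((memLp_id_gaussianReal' 2 (by simp)).comp_measurePreserving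
      (measurePreserving_eval _ i)).const_mul (a i)

lemma variance_dotProduct_stdGaussian (a : Fin d → ℝ) :
    Var[fun v => a ⬝ᵥ v; stdGaussian d] = a ⬝ᵥ a := by
  have h : (fun v : Fin d → ℝ => a ⬝ᵥ v) = ∑ i, fun v => a i * v i := by
    ext v; simp [dotProduct, Finset.sum_apply]
  rw [h, stdGaussian,
    variance_sum_pi (X := fun i y => a i * y) fun i => (memLp_id_gaussianReal 2).const_mul (a i)]
  refine Finset.sum_congr rfl fun i _ => ?_
  simpa [sq] using variance_const_mul (a i) id (gaussianReal 0 1)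

end Gaussian

section Filtration

variable {Ω : Type*} {d : ℕ} {ξ : ℕ → Ω → Fin d → ℝ} {t : ℕ}

lemma filt_mono {s s' : ℕ} (h : s ≤ s') : filt ξ t s ≤ filt ξ t s' :=
  biSup_mono fun _ hi => ⟨hi.1, hi.2.trans_le h⟩

lemma measurable_filt_succ {s : ℕ} (h : t ≤ s) : Measurable[filt ξ t (s + 1)] (ξ s) :=
  Measurable.of_comap_le <| le_biSup (fun i => MeasurableSpace.comap (ξ i) inferInstance)
    (Set.mem_Ico.2 ⟨h, s.lt_succ_self⟩)

lemma indepFun_of_measurable_filt [MeasurableSpace Ω] {P : Measure Ω} {T s : ℕ}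
    (hξmeas : ∀ s, t ≤ s → s < T → Measurable (ξ s))
    (hξindep : iIndepFun (fun i : Set.Ico t T => ξ i) P) (hts : t ≤ s) (hsT : s < T)
    {β : Type*} [MeasurableSpace β] {f : Ω → β} (hf : Measurable[filt ξ t s] f) :
    IndepFun f (ξ s) P := by
  let i₀ : Set.Ico t T := ⟨s, hts, hsT⟩
  have hindep := indep_iSup_of_disjoint (fun i : Set.Ico t T => (hξmeas i i.2.1 i.2.2).comap_le)
    hξindep.iIndep (S := {i | (i : ℕ) < s}) (T := {i₀})
    (Set.disjoint_singleton_right.2 (lt_irrefl s))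
  rw [IndepFun_iff_Indep]
  refine indep_of_indep_of_le hindep (hf.comap_le.trans (iSup₂_le fun h hh => ?_))
    (le_iSup₂_of_le i₀ rfl le_rfl)
  exact le_iSup₂_of_le (f := fun (i : Set.Ico t T) (_ : i ∈ {i : Set.Ico t T | (i : ℕ) < s}) =>
    MeasurableSpace.comap (ξ i) inferInstance) ⟨h, hh.1, hh.2.trans hsT⟩ hh.2 le_rfl

end Filtration

section Wealth

variable {Ω : Type*} {n d : ℕ} {r : ℕ → ℝ} {γ : ℕ → Fin n → ℝ}
  {σm : ℕ → Matrix (Fin n) (Fin d) ℝ} {ξ : ℕ → Ω → Fin d → ℝ} {π : ℕ → Ω → Fin n → ℝ}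
  {t : ℕ} {x : ℝ}

lemma wealth_of_le {s : ℕ} (h : s ≤ t) : wealth r γ σm ξ π t x s = fun _ => x := by
  rw [wealth, Nat.sub_eq_zero_of_le h, wealthAux]

lemma wealth_succ {s : ℕ} (h : t ≤ s) :
    wealth r γ σm ξ π t x (s + 1) = fun ω =>
      r s * wealth r γ σm ξ π t x s ω + γ s ⬝ᵥ π s ω + π s ω ⬝ᵥ (σm s *ᵥ ξ s ω) := by
  rw [wealth, Nat.sub_add_comm h, wealthAux, Nat.add_sub_cancel' h]
  rfl

lemma measurable_wealth_filt (hπ : ∀ s, Measurable[filt ξ t s] (π s)) (s : ℕ) :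
    Measurable[filt ξ t s] (wealth r γ σm ξ π t x s) := by
  induction s with
  | zero => rw [wealth_of_le (Nat.zero_le t)]; exact measurable_const
  | succ s ih =>
    rcases le_or_gt t s with h | h
    · have hX := ih.mono (filt_mono s.le_succ) le_rfl
      have hπs := (hπ s).mono (filt_mono s.le_succ) le_rfl
      have hξs := measurable_filt_succ (ξ := ξ) h
      rw [wealth_succ h]
      simp only [dotProduct, mulVec]
      fun_prop
    · rw [wealth_of_le h]
      exact measurable_const

lemma wealth_succ_of_deterministic (p : ℕ → Fin n → ℝ) {s : ℕ} (h : t ≤ s) :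
    wealth r γ σm ξ (fun s _ => p s) t x (s + 1) = fun ω =>
      r s * wealth r γ σm ξ (fun s _ => p s) t x s ω + γ s ⬝ᵥ p s
        + ((σm s)ᵀ *ᵥ p s) ⬝ᵥ ξ s ω := by
  simp only [wealth_succ h, dotProduct_mulVec, mulVec_transpose]

end Wealth

section DeterministicStrategy

variable {Ω : Type*} [MeasurableSpace Ω] {P : Measure Ω} {n d : ℕ} {r : ℕ → ℝ}
  {γ : ℕ → Fin n → ℝ} {σm : ℕ → Matrix (Fin n) (Fin d) ℝ} {ξ : ℕ → Ω → Fin d → ℝ}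
  {t T : ℕ} {x : ℝ} (p : ℕ → Fin n → ℝ)

lemma memLp_wealth_of_deterministic [IsFiniteMeasure P]
    (hξ : ∀ s, t ≤ s → s < T → MeasurePreserving (ξ s) P (stdGaussian d)) {s : ℕ}
    (hsT : s ≤ T) : MemLp (wealth r γ σm ξ (fun s _ => p s) t x s) 2 P := by
  induction s with
  | zero => rw [wealth_of_le (Nat.zero_le t)]; exact memLp_const x
  | succ s ih =>
    rcases le_or_gt t s with h | h
    · rw [wealth_succ_of_deterministic p h]
      exact (((ih (by omega)).const_mul _).add (memLp_const _)).add
        ((memLp_dotProduct_stdGaussian _).comp_measurePreserving (hξ s h (by omega)))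
    · rw [wealth_of_le h]
      exact memLp_const x

theorem variance_wealth_succ_of_deterministic [IsProbabilityMeasure P]
    (hξ : ∀ s, t ≤ s → s < T → MeasurePreserving (ξ s) P (stdGaussian d))
    (hξindep : iIndepFun (fun i : Set.Ico t T => ξ i) P) {s : ℕ} (hts : t ≤ s) (hsT : s < T) :
    Var[wealth r γ σm ξ (fun s _ => p s) t x (s + 1); P]
      = r s ^ 2 * Var[wealth r γ σm ξ (fun s _ => p s) t x s; P]
        + ((σm s)ᵀ *ᵥ p s) ⬝ᵥ ((σm s)ᵀ *ᵥ p s) := by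
  rw [wealth_succ_of_deterministic p hts]
  set X := wealth r γ σm ξ (fun s _ => p s) t x s
  set a := (σm s)ᵀ *ᵥ p s
  have hX : MemLp X 2 P := memLp_wealth_of_deterministic p hξ hsT.le
  have hdrift : MemLp (fun ω => r s * X ω + γ s ⬝ᵥ p s) 2 P :=
    (hX.const_mul _).add (memLp_const _)
  have hdot : Measurable fun v : Fin d → ℝ => a ⬝ᵥ v :=
    (continuous_const.dotProduct continuous_id).measurable
  have hnoise : MemLp (fun ω => a ⬝ᵥ ξ s ω) 2 P :=
    (memLp_dotProduct_stdGaussian a).comp_measurePreserving (hξ s hts hsT)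
  have hindep : IndepFun (fun ω => r s * X ω + γ s ⬝ᵥ p s) (fun ω => a ⬝ᵥ ξ s ω) P :=
    (indepFun_of_measurable_filt (fun s h1 h2 => (hξ s h1 h2).measurable) hξindep hts hsT
      (measurable_wealth_filt (fun _ => measurable_const) s)).comp
      (measurable_id.const_mul (r s) |>.add_const _) hdot
  rw [hindep.variance_fun_add hdrift hnoise,
    variance_add_const (hX.const_mul _).aestronglyMeasurable, variance_const_mul,
    (hξ s hts hsT).variance_fun_comp hdot.aemeasurable, variance_dotProduct_stdGaussian]

end DeterministicStrategy

end MeanVarianceModel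

open MeanVarianceModel

theorem variance_recursion_of_optimal_wealth_general
    {Ω : Type*} [MeasurableSpace Ω]
    (P : Measure Ω) [IsProbabilityMeasure P]
    (n d : ℕ)
    (t T : ℕ)
    (r : ℕ → ℝ) (γ : ℕ → Fin n → ℝ) (σm : ℕ → Matrix (Fin n) (Fin d) ℝ)
    (hσ : ∀ s, t ≤ s → s < T → (σm s * (σm s)ᵀ).PosDef)
    (ξ : ℕ → Ω → Fin d → ℝ)
    (hξmeas : ∀ s, t ≤ s → s < T → Measurable (ξ s))
    (hξindep : iIndepFun
      (fun i : Set.Ico t T => ξ i) P)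
    (hξgauss : ∀ s, t ≤ s → s < T → Measure.map (ξ s) P = stdGaussian d)
    (μ x : ℝ) :
    (∫ ω, (wealth r γ σm ξ (bellmanStrategy (Ω := Ω) r γ σm T μ) t x t ω
        - ∫ ω', wealth r γ σm ξ (bellmanStrategy (Ω := Ω) r γ σm T μ) t x t ω' ∂P) ^ 2 ∂P
      = 0) ∧
    ∀ s, t < s → s ≤ T →
      ∫ ω, (wealth r γ σm ξ (bellmanStrategy (Ω := Ω) r γ σm T μ) t x s ω
          - ∫ ω', wealth r γ σm ξ (bellmanStrategy (Ω := Ω) r γ σm T μ) t x s ω' ∂P) ^ 2 ∂P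
        = r (s - 1) ^ 2 *
            ∫ ω, (wealth r γ σm ξ (bellmanStrategy (Ω := Ω) r γ σm T μ) t x (s - 1) ω
              - ∫ ω', wealth r γ σm ξ (bellmanStrategy (Ω := Ω) r γ σm T μ) t x (s - 1) ω' ∂P) ^ 2 ∂P
          + (riskPremium γ σm (s - 1) / (4 * μ ^ 2)) *
              ((∏ h ∈ Finset.Ico (s - 1) T, r h)⁻¹) ^ 2 := by
  set p : ℕ → Fin n → ℝ := fun s =>
    ((1 / (2 * μ)) * (∏ h ∈ Finset.Ico s T, r h)⁻¹) • ((σm s * (σm s)ᵀ)⁻¹ *ᵥ γ s)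
  have hπ : bellmanStrategy (Ω := Ω) r γ σm T μ = fun s _ => p s := rfl
  have hξ : ∀ s, t ≤ s → s < T → MeasurePreserving (ξ s) P (stdGaussian d) :=
    fun s h₁ h₂ => ⟨hξmeas s h₁ h₂, hξgauss s h₁ h₂⟩
  have hvar : ∀ s ≤ T, Var[wealth r γ σm ξ (fun s _ => p s) t x s; P]
      = ∫ ω, (wealth r γ σm ξ (fun s _ => p s) t x s ω
          - ∫ ω', wealth r γ σm ξ (fun s _ => p s) t x s ω' ∂P) ^ 2 ∂P :=
    fun s hs => variance_eq_integral (memLp_wealth_of_deterministic p hξ hs).aemeasurable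
  rw [hπ]
  refine ⟨by simp [wealth_of_le le_rfl], fun s hts hsT => ?_⟩
  obtain ⟨k, rfl⟩ : ∃ k, s = k + 1 := ⟨s - 1, by omega⟩
  rw [Nat.add_sub_cancel, ← hvar _ hsT, ← hvar _ (by omega),
    variance_wealth_succ_of_deterministic p hξ hξindep (by omega) hsT,
    transpose_mulVec_smul_inv_dotProduct_self (hσ k (by omega) hsT).det_pos.ne'.isUnit,
    riskPremium]
  ring

/-- Variance recursion for the optimally controlled wealth: under the Bellman-type
strategy `π*`, writing `Var[X^{π*}(s)] = E[(X^{π*}(s) − E[X^{π*}(s)])²]`, one has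
`Var[X^{π*}(t)] = 0` and, for `t < s ≤ T`,
`Var[X^{π*}(s)] = r(s−1)²·Var[X^{π*}(s−1)] + (β(s−1)/(4μ²))·(∏_{h=s−1}^{T−1} r h)⁻²`. -/
theorem variance_recursion_of_optimal_wealth
    {Ω : Type*} [MeasurableSpace Ω]
    (P : Measure Ω) [IsProbabilityMeasure P]
    (n d : ℕ) (hn : 1 ≤ n) (hd : 1 ≤ d)
    (t T : ℕ) (htT : t < T)
    (r : ℕ → ℝ) (γ : ℕ → Fin n → ℝ) (σm : ℕ → Matrix (Fin n) (Fin d) ℝ)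
    (hr : ∀ s, t ≤ s → s < T → 0 < r s)
    (hγ : ∀ s, t ≤ s → s < T → γ s ≠ 0)
    (hσ : ∀ s, t ≤ s → s < T → (σm s * (σm s)ᵀ).PosDef)
    (ξ : ℕ → Ω → Fin d → ℝ)
    (hξmeas : ∀ s, t ≤ s → s < T → Measurable (ξ s))
    (hξindep : iIndepFun
      (fun i : Set.Ico t T => ξ i) P)
    (hξgauss : ∀ s, t ≤ s → s < T → Measure.map (ξ s) P = stdGaussian d)
    (μ x : ℝ) (hμ : 0 < μ) :
    (∫ ω, (wealth r γ σm ξ (bellmanStrategy (Ω := Ω) r γ σm T μ) t x t ω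
        - ∫ ω', wealth r γ σm ξ (bellmanStrategy (Ω := Ω) r γ σm T μ) t x t ω' ∂P) ^ 2 ∂P
      = 0) ∧
    ∀ s, t < s → s ≤ T →
      ∫ ω, (wealth r γ σm ξ (bellmanStrategy (Ω := Ω) r γ σm T μ) t x s ω
          - ∫ ω', wealth r γ σm ξ (bellmanStrategy (Ω := Ω) r γ σm T μ) t x s ω' ∂P) ^ 2 ∂P
        = r (s - 1) ^ 2 *
            ∫ ω, (wealth r γ σm ξ (bellmanStrategy (Ω := Ω) r γ σm T μ) t x (s - 1) ω
              - ∫ ω', wealth r γ σm ξ (bellmanStrategy (Ω := Ω) r γ σm T μ) t x (s - 1) ω' ∂P) ^ 2 ∂P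
          + (riskPremium γ σm (s - 1) / (4 * μ ^ 2)) *
              ((∏ h ∈ Finset.Ico (s - 1) T, r h)⁻¹) ^ 2 :=
  variance_recursion_of_optimal_wealth_general P n d t T r γ σm hσ ξ hξmeas hξindep hξgauss μ x
end
end

section
/- Theorem 4 (existence of an optimal investment period): let α > 0, x > 0, θ(h) > 1 and β(h) > 0 for all integers h ≥ 0, and set J(τ) = α²x²·(∏_{h=0}^{τ−1} θ(h))² / ∑_{h=0}^{τ−1} β(h) for integers τ ≥ 1. Suppose there exists an integer τ̂ ≥ 1 such that (θ(s)² − 1)·∑_{h=0}^{s−1} β(h) − β(s) ≥ 0 for all s ≥ τ̂. Then J(τ) ≥ J(τ̂) for all τ ≥ τ̂, and consequently there exists an integer τ* with 1 ≤ τ* ≤ τ̂ such that J(τ*) ≤ J(τ) for every integer τ ≥ 1 (i.e., the infimum of J over the positive integers is attained at some τ* ≤ τ̂). -/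
open Finset

/-- Theorem 4 (existence of an optimal investment period): with
`J τ = α²x²·(∏_{h<τ} θ h)² / ∑_{h<τ} β h` for `τ ≥ 1`, if there is `τ̂ ≥ 1` such that
`(θ s² − 1)·∑_{h<s} β h − β s ≥ 0` for all `s ≥ τ̂`, then `J τ ≥ J τ̂` for all `τ ≥ τ̂`,
and the infimum of `J` over the positive integers is attained at some `τ* ≤ τ̂`. -/
theorem exists_optimal_investment_period (α x : ℝ) (hα : 0 < α) (hx : 0 < x)
    (θ β : ℕ → ℝ) (hθ : ∀ h, 1 < θ h) (hβ : ∀ h, 0 < β h)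
    (J : ℕ → ℝ)
    (hJ : ∀ τ, 1 ≤ τ →
      J τ = α ^ 2 * x ^ 2 * (∏ h ∈ range τ, θ h) ^ 2 / (∑ h ∈ range τ, β h))
    (τhat : ℕ) (hτhat : 1 ≤ τhat)
    (hcrit : ∀ s, τhat ≤ s → 0 ≤ (θ s ^ 2 - 1) * (∑ h ∈ range s, β h) - β s) :
    (∀ τ, τhat ≤ τ → J τhat ≤ J τ) ∧
    ∃ τstar, 1 ≤ τstar ∧ τstar ≤ τhat ∧ ∀ τ, 1 ≤ τ → J τstar ≤ J τ := by
  have hSpos : ∀ τ, 1 ≤ τ → 0 < ∑ h ∈ range τ, β h := by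
    intro τ hτ
    exact Finset.sum_pos (fun i _ => hβ i) (Finset.nonempty_range_iff.mpr (by omega))
  have hPpos : ∀ τ, 0 < ∏ h ∈ range τ, θ h :=
    fun τ => Finset.prod_pos fun i _ => lt_trans one_pos (hθ i)
  have hC : (0:ℝ) < α ^ 2 * x ^ 2 := by positivity
  have hstep : ∀ τ, τhat ≤ τ → J τ ≤ J (τ + 1) := by
    intro τ hτ
    have h1 : 1 ≤ τ := le_trans hτhat hτ
    rw [hJ τ h1, hJ (τ + 1) (by omega)]
    rw [Finset.prod_range_succ, Finset.sum_range_succ]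
    rw [div_le_div_iff₀ (hSpos τ h1) (by have := hSpos τ h1; have := hβ τ; linarith)]
    have hc := hcrit τ hτ
    have hP := hPpos τ
    have key : (∑ h ∈ range τ, β h) + β τ ≤ θ τ ^ 2 * ∑ h ∈ range τ, β h := by nlinarith
    calc α ^ 2 * x ^ 2 * (∏ h ∈ range τ, θ h) ^ 2 * ((∑ h ∈ range τ, β h) + β τ)
        ≤ α ^ 2 * x ^ 2 * (∏ h ∈ range τ, θ h) ^ 2 * (θ τ ^ 2 * ∑ h ∈ range τ, β h) := by
          apply mul_le_mul_of_nonneg_left key (by positivity)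
      _ = α ^ 2 * x ^ 2 * ((∏ h ∈ range τ, θ h) * θ τ) ^ 2 * ∑ h ∈ range τ, β h := by ring
  have hmono : ∀ τ, τhat ≤ τ → J τhat ≤ J τ := by
    intro τ hτ
    induction τ with
    | zero => omega
    | succ n ih =>
      rcases Nat.lt_or_ge τhat (n + 1) with h | h
      · exact le_trans (ih (by omega)) (hstep n (by omega))
      · have : τhat = n + 1 := le_antisymm hτ h
        rw [this]
  refine ⟨hmono, ?_⟩
  obtain ⟨m, hm, hmin⟩ := Finset.exists_min_image (Finset.Icc 1 τhat) J
    ⟨1, by simp [hτhat]⟩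
  simp only [Finset.mem_Icc] at hm
  refine ⟨m, hm.1, hm.2, fun τ hτ => ?_⟩
  rcases Nat.lt_or_ge τ τhat with h | h
  · exact hmin τ (by simp [Finset.mem_Icc]; omega)
  · exact le_trans (hmin τhat (by simp [Finset.mem_Icc, hτhat])) (hmono τ h)
end
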